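/- arXiv:math/0310265 — 3 statements merged into one kernel-verified Lean document; each statement's English description precedes it below -/
import Mathlib

section
/- If f ∈ N^o ⊗ N is idempotent (f² = f) and the left-multiplication operators by f and by e on N^o ⊗ N have the same kernel (for every u ∈ N^o ⊗ N, f·u = 0 iff e·u = 0), then there exists g ∈ N with E_{Z(N)}(g) = 1 such that f = (1^o ⊗ g)·e in N^o ⊗ N. -/
/- Context: `N = ⨁_{γ ∈ Γ} M_{n γ}(ℂ)`, with matrix units `matUnit n γ i j`,
`N^o ⊗ N` the algebraic tensor product of the opposite algebra with `N`,
`mulMap` the multiplication map `m(a^o ⊗ b) = a * b`, `sepE` the symmetric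
separating element `e = Σ_γ Σ_{i,j} (1/n_γ) (e^γ_{i,j})^o ⊗ e^γ_{j,i}`, and
`EZ` the canonical conditional expectation onto the center of `N`. -/

open scoped TensorProduct
open MulOpposite

/-- The algebra `N = ⨁_{γ ∈ Γ} M_{n γ}(ℂ)`. -/
abbrev NAlg {Γ : Type*} [Fintype Γ] (n : Γ → ℕ) : Type _ :=
  ∀ γ : Γ, Matrix (Fin (n γ)) (Fin (n γ)) ℂ

/-- The matrix units `e^γ_{i,j}` of `N`. -/
noncomputable def matUnit {Γ : Type*} [Fintype Γ] [DecidableEq Γ] (n : Γ → ℕ)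
    (γ : Γ) (i j : Fin (n γ)) : NAlg n :=
  Pi.single γ (Matrix.single i j 1)

/-- The multiplication map `m : N^o ⊗ N → N`, `m(a^o ⊗ b) = ab`. -/
noncomputable def mulMap {Γ : Type*} [Fintype Γ] (n : Γ → ℕ) :
    ((NAlg n)ᵐᵒᵖ ⊗[ℂ] NAlg n) →ₗ[ℂ] NAlg n :=
  (LinearMap.mul' ℂ (NAlg n)).comp
    (TensorProduct.map (opLinearEquiv ℂ).symm.toLinearMap LinearMap.id)

/-- The symmetric separating element `e = Σ_γ Σ_{i,j} (1/n_γ) (e^γ_{i,j})^o ⊗ e^γ_{j,i}`. -/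
noncomputable def sepE {Γ : Type*} [Fintype Γ] [DecidableEq Γ] (n : Γ → ℕ) :
    (NAlg n)ᵐᵒᵖ ⊗[ℂ] NAlg n :=
  ∑ γ : Γ, ∑ i : Fin (n γ), ∑ j : Fin (n γ),
    (n γ : ℂ)⁻¹ • (op (matUnit n γ i j) ⊗ₜ[ℂ] matUnit n γ j i)

/-- `f ∈ N^o ⊗ N` is a separating element of `N` if `f(a^o ⊗ 1) = f(1 ⊗ a)` for all
`a ∈ N` and `m(f) = 1`. -/
def IsSepElt {Γ : Type*} [Fintype Γ] (n : Γ → ℕ) (f : (NAlg n)ᵐᵒᵖ ⊗[ℂ] NAlg n) : Prop :=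
  (∀ a : NAlg n, f * (op a ⊗ₜ[ℂ] (1 : NAlg n)) = f * ((1 : (NAlg n)ᵐᵒᵖ) ⊗ₜ[ℂ] a)) ∧
    mulMap n f = 1

/-- The canonical conditional expectation `E_{Z(N)} : N → Z(N)`,
`E_{Z(N)}(x) = Σ_γ Σ_{i,j} (1/n_γ) e^γ_{i,j} x e^γ_{j,i}`. -/
noncomputable def EZ {Γ : Type*} [Fintype Γ] [DecidableEq Γ] (n : Γ → ℕ)
    (x : NAlg n) : NAlg n :=
  ∑ γ : Γ, ∑ i : Fin (n γ), ∑ j : Fin (n γ),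
    (n γ : ℂ)⁻¹ • (matUnit n γ i j * x * matUnit n γ j i)

/-!
Let `ψ = revMul`, so `ψ(a^o ⊗ b) = b a`. Since `(a^o ⊗ 1) e = (1 ⊗ a) e`, every `u e` equals `(1 ⊗ ψ u) e`,
and since `ψ e = 1`, right multiplication by `e` does not change `ψ`. The kernel condition,
tested on `1 - e` and `1 - f`, gives `f e = f` and `e f = e`. So `f = (1 ⊗ g) e` with `g = ψ f`,
and `E_{Z(N)}(g) = ψ(e (1 ⊗ g)) = ψ(e (1 ⊗ g) e) = ψ(e f) = ψ(e) = 1`.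
-/

theorem IsIdempotentElem.mul_eq_self_of_forall_mul_eq_zero {A : Type*} [Ring A] {e f : A}
    (he : IsIdempotentElem e) (h : ∀ u, e * u = 0 → f * u = 0) : f * e = f := by
  have hf : f * (1 - e) = 0 := h _ (by rw [mul_sub, mul_one, he.eq, sub_self])
  rwa [mul_sub, mul_one, sub_eq_zero, eq_comm] at hf

section RevMul

variable (R A : Type*) [CommSemiring R] [Semiring A] [Algebra R A]

noncomputable def revMul : Aᵐᵒᵖ ⊗[R] A →ₗ[R] A :=
  TensorProduct.lift ((LinearMap.mul R A).flip ∘ₗ (opLinearEquiv R).symm.toLinearMap)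

variable {R A}

@[simp]
theorem revMul_tmul (a : Aᵐᵒᵖ) (b : A) : revMul R A (a ⊗ₜ b) = b * unop a := by
  simp [revMul]

theorem revMul_tmul_mul (a b : A) (t : Aᵐᵒᵖ ⊗[R] A) :
    revMul R A ((op a ⊗ₜ b) * t) = b * revMul R A t * a := by
  induction t using TensorProduct.induction_on with
  | zero => simp
  | tmul x y => simp [Algebra.TensorProduct.tmul_mul_tmul, mul_assoc]
  | add x y hx hy => simp [mul_add, hx, hy, add_mul]

theorem revMul_mul_of_revMul_eq_one {t : Aᵐᵒᵖ ⊗[R] A} (ht : revMul R A t = 1)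
    (u : Aᵐᵒᵖ ⊗[R] A) : revMul R A (u * t) = revMul R A u := by
  induction u using TensorProduct.induction_on with
  | zero => simp
  | tmul a b => rw [← op_unop a, revMul_tmul_mul, ht, revMul_tmul, unop_op, mul_one]
  | add x y hx hy => simp [add_mul, hx, hy]

theorem mul_eq_one_tmul_revMul_mul {s : Aᵐᵒᵖ ⊗[R] A}
    (hs : ∀ a : A, (op a ⊗ₜ (1 : A)) * s = (1 ⊗ₜ a) * s) (u : Aᵐᵒᵖ ⊗[R] A) :
    u * s = (1 ⊗ₜ revMul R A u) * s := by
  induction u using TensorProduct.induction_on with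
  | zero => simp
  | tmul a b =>
    have hsplit : a ⊗ₜ[R] b = (1 ⊗ₜ b) * (op (unop a) ⊗ₜ (1 : A)) := by
      rw [Algebra.TensorProduct.tmul_mul_tmul, one_mul, mul_one, op_unop]
    rw [revMul_tmul, hsplit, mul_assoc, hs, ← mul_assoc, Algebra.TensorProduct.tmul_mul_tmul,
      one_mul]
  | add x y hx hy => rw [add_mul, hx, hy, map_add, TensorProduct.tmul_add, add_mul]

end RevMul

section MatrixUnits

variable {Γ : Type*} [Fintype Γ] [DecidableEq Γ] (n : Γ → ℕ)

theorem matUnit_mul_matUnit (γ : Γ) (i j k l : Fin (n γ)) :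
    matUnit n γ i j * matUnit n γ k l = if j = k then matUnit n γ i l else 0 := by
  split_ifs with hjk <;> simp [matUnit, ← Pi.single_mul, hjk]

theorem matUnit_mul (γ : Γ) (i j : Fin (n γ)) (a : NAlg n) :
    matUnit n γ i j * a = ∑ k, a γ j k • matUnit n γ i k := by
  ext δ p q
  rcases eq_or_ne δ γ with rfl | h
  · simp [matUnit, Matrix.mul_apply, Matrix.sum_apply, Matrix.single_apply, ite_and]
  · simp [matUnit, h]

theorem mul_matUnit (γ : Γ) (i j : Fin (n γ)) (a : NAlg n) :
    a * matUnit n γ i j = ∑ k, a γ k i • matUnit n γ k j := by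
  ext δ p q
  rcases eq_or_ne δ γ with rfl | h
  · simp [matUnit, Matrix.mul_apply, Matrix.sum_apply, Matrix.single_apply, ite_and]
  · simp [matUnit, h]

theorem sum_matUnit_self : ∑ γ : Γ, ∑ j : Fin (n γ), matUnit n γ j j = 1 := by
  have hblock (γ : Γ) : ∑ j : Fin (n γ), matUnit n γ j j = Pi.single γ 1 := by
    rw [← Matrix.sum_single_one]
    exact (map_sum (AddMonoidHom.single (fun γ => Matrix (Fin (n γ)) (Fin (n γ)) ℂ) γ) _ _).symm
  simp only [hblock, Finset.univ_sum_single]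
  rfl

end MatrixUnits

section SeparatingElement

variable {Γ : Type*} [Fintype Γ] [DecidableEq Γ] (n : Γ → ℕ)

theorem tmul_one_mul_sepE (a : NAlg n) :
    (op a ⊗ₜ (1 : NAlg n)) * sepE n = (1 ⊗ₜ a) * sepE n := by
  simp only [sepE, Finset.mul_sum, mul_smul_comm, Algebra.TensorProduct.tmul_mul_tmul, ← op_mul,
    one_mul, matUnit_mul, mul_matUnit, Finset.op_sum, op_smul, TensorProduct.sum_tmul,
    TensorProduct.tmul_sum, TensorProduct.smul_tmul', TensorProduct.tmul_smul, Finset.smul_sum,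
    smul_smul]
  refine Finset.sum_congr rfl fun γ _ => Finset.sum_congr rfl fun i _ => ?_
  rw [Finset.sum_comm]
  simp only [mul_comm]

theorem revMul_sepE (hn : ∀ γ, 1 ≤ n γ) : revMul ℂ (NAlg n) (sepE n) = 1 := by
  simp only [sepE, map_sum, map_smul, revMul_tmul, unop_op, matUnit_mul_matUnit, if_true,
    Finset.sum_const, Finset.card_univ, Fintype.card_fin]
  have hn' (γ : Γ) : (n γ : ℂ) ≠ 0 := Nat.cast_ne_zero.2 (Nat.one_le_iff_ne_zero.1 (hn γ))
  simp only [← Nat.cast_smul_eq_nsmul ℂ, Finset.smul_sum, smul_smul, mul_inv_cancel₀ (hn' _),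
    one_smul, sum_matUnit_self]

theorem revMul_sepE_mul_one_tmul (c : NAlg n) :
    revMul ℂ (NAlg n) (sepE n * (1 ⊗ₜ c)) = EZ n c := by
  simp only [sepE, Finset.sum_mul, smul_mul_assoc, Algebra.TensorProduct.tmul_mul_tmul, mul_one,
    map_sum, map_smul, revMul_tmul, unop_op]
  exact Finset.sum_congr rfl fun γ _ => Finset.sum_comm

theorem isIdempotentElem_sepE (hn : ∀ γ, 1 ≤ n γ) : IsIdempotentElem (sepE n) := by
  rw [IsIdempotentElem, mul_eq_one_tmul_revMul_mul (tmul_one_mul_sepE n), revMul_sepE n hn,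
    ← Algebra.TensorProduct.one_def, one_mul]

end SeparatingElement

theorem exists_g_of_idem_general {Γ : Type*} [Fintype Γ] [DecidableEq Γ]
    (n : Γ → ℕ) (hn : ∀ γ, 1 ≤ n γ) (f : (NAlg n)ᵐᵒᵖ ⊗[ℂ] NAlg n)
    (hidem : f * f = f)
    (hker : ∀ u : (NAlg n)ᵐᵒᵖ ⊗[ℂ] NAlg n, f * u = 0 ↔ sepE n * u = 0) :
    ∃ g : NAlg n, EZ n g = 1 ∧
      f = (op (1 : NAlg n) ⊗ₜ[ℂ] g) * sepE n := by
  have hψe := revMul_sepE n hn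
  have hfe : f * sepE n = f :=
    (isIdempotentElem_sepE n hn).mul_eq_self_of_forall_mul_eq_zero fun u => (hker u).2
  have hef : sepE n * f = sepE n :=
    IsIdempotentElem.mul_eq_self_of_forall_mul_eq_zero hidem fun u => (hker u).1
  have hf : f = (1 ⊗ₜ revMul ℂ (NAlg n) f) * sepE n := by
    conv_lhs => rw [← hfe, mul_eq_one_tmul_revMul_mul (tmul_one_mul_sepE n)]
  refine ⟨revMul ℂ (NAlg n) f, ?_, hf⟩
  calc EZ n (revMul ℂ (NAlg n) f)
      = revMul ℂ (NAlg n) (sepE n * (1 ⊗ₜ revMul ℂ (NAlg n) f) * sepE n) := by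
        rw [revMul_mul_of_revMul_eq_one hψe, revMul_sepE_mul_one_tmul]
    _ = 1 := by rw [mul_assoc, ← hf, hef, hψe]

/-- If `f` is idempotent and left multiplication by `f` and by `e` have the same
kernel, then `f = (1 ⊗ g)·e` for some `g ∈ N` with `E_{Z(N)}(g) = 1`. -/
theorem exists_g_of_idem {Γ : Type*} [Fintype Γ] [DecidableEq Γ] [Nonempty Γ]
    (n : Γ → ℕ) (hn : ∀ γ, 1 ≤ n γ) (f : (NAlg n)ᵐᵒᵖ ⊗[ℂ] NAlg n)
    (hidem : f * f = f)
    (hker : ∀ u : (NAlg n)ᵐᵒᵖ ⊗[ℂ] NAlg n, f * u = 0 ↔ sepE n * u = 0) :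
    ∃ g : NAlg n, EZ n g = 1 ∧
      f = (op (1 : NAlg n) ⊗ₜ[ℂ] g) * sepE n :=
  exists_g_of_idem_general n hn f hidem hker
end

section
/- Suppose n_{γ₀} ≥ 2 for some γ₀ ∈ Γ (i.e., N is not abelian). Then the element g = 1 + e^{γ₀}_{1,1} − (1/(n_{γ₀}−1)) Σ_{i=2}^{n_{γ₀}} e^{γ₀}_{i,i} of N satisfies E_{Z(N)}(g) = 1, and f = (1^o ⊗ g)·e is a separating element of N with f ≠ e. In particular, a nonabelian N admits separating elements different from the symmetric one e. -/
/- Context: `N = ⨁_{γ ∈ Γ} M_{n γ}(ℂ)`, with matrix units `matUnit n γ i j`,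
`N^o ⊗ N` the algebraic tensor product of the opposite algebra with `N`,
`mulMap` the multiplication map `m(a^o ⊗ b) = a * b`, `sepE` the symmetric
separating element `e = Σ_γ Σ_{i,j} (1/n_γ) (e^γ_{i,j})^o ⊗ e^γ_{j,i}`, and
`EZ` the canonical conditional expectation onto the center of `N`. -/

open scoped TensorProduct
open MulOpposite

/-! For `g ∈ N` put `f_g = (1^o ⊗ g) e`. Since `e (a^o ⊗ 1) = e (1 ⊗ a)`, every `f_g` inherits this
identity, and `m(f_g) = E_{Z(N)}(g)`, where blockwise `E_{Z(N)}(x)_γ = (tr x_γ / n_γ) 1`. So `f_g` is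
separating as soon as every block of `g` has trace `n_γ`, which is how the coefficient
`1 / (n_{γ₀} - 1)` is chosen. The flipped multiplication `a^o ⊗ b ↦ b a` sends `e` to `1`, hence
`f_g` to `g`; so `g ↦ f_g` is injective and `f_g ≠ e = f_1` because `g ≠ 1`. -/

namespace Matrix

variable {m R : Type*} [Fintype m] [DecidableEq m] [CommSemiring R]

theorem sum_sum_single_mul_mul_single (M : Matrix m m R) :
    ∑ i, ∑ j, single i j (1 : R) * M * single j i 1 = M.trace • (1 : Matrix m m R) := by
  simp only [single_mul_mul_single, one_mul, mul_one]
  ext a b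
  rcases eq_or_ne a b with rfl | h
  · simp [Matrix.sum_apply, single_apply, trace]
  · simp only [Matrix.sum_apply, single_apply, smul_apply, one_apply_ne h, smul_zero]
    exact Finset.sum_eq_zero fun x _ => Finset.sum_eq_zero fun y _ =>
      if_neg fun hx => h (hx.1.symm.trans hx.2)

end Matrix

section FlipMulMap

variable (R A : Type*) [CommSemiring R] [Semiring A] [Algebra R A]

noncomputable def flipMulMap : Aᵐᵒᵖ ⊗[R] A →ₗ[R] A :=
  LinearMap.mul' R A ∘ₗ (TensorProduct.comm R A A).toLinearMap ∘ₗ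
    TensorProduct.map (opLinearEquiv R).symm.toLinearMap LinearMap.id

variable {R A}

@[simp]
theorem flipMulMap_tmul (a : Aᵐᵒᵖ) (b : A) : flipMulMap R A (a ⊗ₜ b) = b * unop a := by
  simp [flipMulMap]

theorem flipMulMap_op_one_tmul_mul (g : A) (t : Aᵐᵒᵖ ⊗[R] A) :
    flipMulMap R A ((op 1 ⊗ₜ g) * t) = g * flipMulMap R A t := by
  induction t using TensorProduct.induction_on with
  | zero => simp
  | tmul x y => simp [mul_assoc]
  | add u v hu hv => rw [mul_add, map_add, hu, hv, map_add, mul_add]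

end FlipMulMap

theorem mulMap_tmul {Γ : Type*} [Fintype Γ] (n : Γ → ℕ) (a b : NAlg n) :
    mulMap n (op a ⊗ₜ[ℂ] b) = a * b := by
  simp [mulMap]

section MatUnit

variable {Γ : Type*} [Fintype Γ] [DecidableEq Γ] (n : Γ → ℕ)

theorem matUnit_mul_matUnit_of_ne {γ δ : Γ} (h : γ ≠ δ) (i j : Fin (n γ)) (k l : Fin (n δ)) :
    matUnit n γ i j * matUnit n δ k l = 0 := by
  ext ε : 1
  rcases eq_or_ne ε γ with rfl | hε
  · simp [matUnit, Pi.single_eq_of_ne h]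
  · simp [matUnit, Pi.single_eq_of_ne hε]

theorem matUnit_mul_mul_matUnit (x : NAlg n) (γ : Γ) (i j : Fin (n γ)) :
    matUnit n γ i j * x * matUnit n γ j i
      = Pi.single γ (Matrix.single i j 1 * x γ * Matrix.single j i 1) := by
  simp only [matUnit, ← Pi.single_mul_left, ← Pi.single_mul_right, Pi.single_eq_same]

theorem sum_smul_matUnit (a : NAlg n) : ∑ γ, ∑ i, ∑ j, a γ i j • matUnit n γ i j = a := by
  ext γ : 1
  rw [Finset.sum_apply, Finset.sum_eq_single γ
    (fun γ' _ h => by simp [matUnit, Pi.single_eq_of_ne h.symm]) (by simp)]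
  simp [matUnit, Matrix.smul_single, ← Matrix.matrix_eq_sum_single]

end MatUnit

section CenterExpectation

variable {Γ : Type*} [Fintype Γ] [DecidableEq Γ] (n : Γ → ℕ)

theorem EZ_apply (x : NAlg n) (γ : Γ) :
    EZ n x γ = ((n γ : ℂ)⁻¹ * (x γ).trace) • (1 : Matrix (Fin (n γ)) (Fin (n γ)) ℂ) := by
  simp only [EZ, Finset.sum_apply, Pi.smul_apply, matUnit_mul_mul_matUnit]
  rw [Finset.sum_eq_single γ (fun γ' _ h => by simp [Pi.single_eq_of_ne' h]) (by simp)]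
  simp only [Pi.single_eq_same, ← Finset.smul_sum, Matrix.sum_sum_single_mul_mul_single,
    smul_smul]

theorem EZ_eq_one_of_trace {x : NAlg n} (hx : ∀ γ, (x γ).trace = n γ) : EZ n x = 1 := by
  ext γ : 1
  rw [EZ_apply, hx]
  rcases eq_or_ne (n γ) 0 with h | h
  · -- an empty block, where `(n γ)⁻¹ = 0` but all `0 × 0` matrices agree
    ext i
    exact absurd i.isLt (by omega)
  · rw [inv_mul_cancel₀ (by exact_mod_cast h), one_smul, Pi.one_apply]

theorem EZ_one : EZ n 1 = 1 :=
  EZ_eq_one_of_trace n fun γ => by simp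

end CenterExpectation

section SeparatingElement

variable {Γ : Type*} [Fintype Γ] [DecidableEq Γ] (n : Γ → ℕ)

theorem sepE_mul_op_matUnit_tmul_one (δ : Γ) (k l : Fin (n δ)) :
    sepE n * (op (matUnit n δ k l) ⊗ₜ[ℂ] 1)
      = ∑ j, (n δ : ℂ)⁻¹ • (op (matUnit n δ k j) ⊗ₜ[ℂ] matUnit n δ j l) := by
  simp only [sepE, Finset.sum_mul, smul_mul_assoc, Algebra.TensorProduct.tmul_mul_tmul, ← op_mul,
    mul_one]
  rw [Finset.sum_eq_single δ (fun γ _ h => by simp [matUnit_mul_matUnit_of_ne n h.symm]) (by simp)]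
  simp [matUnit_mul_matUnit, apply_ite op, TensorProduct.ite_tmul]

theorem sepE_mul_one_tmul_matUnit (δ : Γ) (k l : Fin (n δ)) :
    sepE n * (1 ⊗ₜ[ℂ] matUnit n δ k l)
      = ∑ j, (n δ : ℂ)⁻¹ • (op (matUnit n δ k j) ⊗ₜ[ℂ] matUnit n δ j l) := by
  simp only [sepE, Finset.sum_mul, smul_mul_assoc, Algebra.TensorProduct.tmul_mul_tmul, mul_one]
  rw [Finset.sum_eq_single δ (fun γ _ h => by simp [matUnit_mul_matUnit_of_ne n h]) (by simp)]
  simp [matUnit_mul_matUnit, TensorProduct.tmul_ite]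

theorem sepE_mul_op_tmul_one (a : NAlg n) :
    sepE n * (op a ⊗ₜ[ℂ] 1) = sepE n * (1 ⊗ₜ[ℂ] a) := by
  rw [← sum_smul_matUnit n a]
  simp only [Finset.op_sum, op_smul, TensorProduct.sum_tmul, TensorProduct.tmul_sum,
    ← TensorProduct.smul_tmul', TensorProduct.tmul_smul, Finset.mul_sum, mul_smul_comm,
    sepE_mul_op_matUnit_tmul_one, sepE_mul_one_tmul_matUnit]

theorem mulMap_op_one_tmul_mul_sepE (g : NAlg n) :
    mulMap n ((op 1 ⊗ₜ[ℂ] g) * sepE n) = EZ n g := by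
  simp only [sepE, EZ, Finset.mul_sum, mul_smul_comm, Algebra.TensorProduct.tmul_mul_tmul,
    op_one, one_mul, map_sum, map_smul, mulMap_tmul, mul_assoc]

theorem flipMulMap_sepE : flipMulMap ℂ (NAlg n) (sepE n) = 1 := by
  rw [← EZ_one n]
  simp only [sepE, EZ, map_sum, map_smul, flipMulMap_tmul, unop_op, mul_one]
  exact Finset.sum_congr rfl fun γ _ => Finset.sum_comm

theorem isSepElt_op_one_tmul_mul_sepE {g : NAlg n} (hg : EZ n g = 1) :
    IsSepElt n ((op 1 ⊗ₜ[ℂ] g) * sepE n) :=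
  ⟨fun a => by simp only [mul_assoc, sepE_mul_op_tmul_one],
    by rw [mulMap_op_one_tmul_mul_sepE, hg]⟩

theorem op_one_tmul_mul_sepE_injective :
    Function.Injective fun g : NAlg n => (op 1 ⊗ₜ[ℂ] g) * sepE n := by
  intro g g' h
  simpa only [flipMulMap_op_one_tmul_mul, flipMulMap_sepE, mul_one] using
    congrArg (flipMulMap ℂ (NAlg n)) h

end SeparatingElement

section PerturbedOne

variable {Γ : Type*} [Fintype Γ] [DecidableEq Γ] (n : Γ → ℕ)

noncomputable def perturbedOne (γ₀ : Γ) (k : Fin (n γ₀)) : NAlg n :=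
  1 + matUnit n γ₀ k k - ((n γ₀ : ℂ) - 1)⁻¹ • ∑ i ∈ Finset.univ.erase k, matUnit n γ₀ i i

theorem trace_perturbedOne_apply {γ₀ : Γ} (k : Fin (n γ₀)) (h : n γ₀ ≠ 1) (γ : Γ) :
    (perturbedOne n γ₀ k γ).trace = n γ := by
  rcases eq_or_ne γ γ₀ with rfl | hγ
  · have : (n γ : ℂ) - 1 ≠ 0 := sub_ne_zero.mpr (by exact_mod_cast h)
    simp [perturbedOne, matUnit, Matrix.trace_sum, inv_mul_cancel₀ this]
  · simp [perturbedOne, matUnit, Pi.single_eq_of_ne hγ]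

theorem EZ_perturbedOne {γ₀ : Γ} (k : Fin (n γ₀)) (h : n γ₀ ≠ 1) :
    EZ n (perturbedOne n γ₀ k) = 1 :=
  EZ_eq_one_of_trace n (trace_perturbedOne_apply n k h)

theorem perturbedOne_ne_one (γ₀ : Γ) (k : Fin (n γ₀)) : perturbedOne n γ₀ k ≠ 1 := by
  intro h
  have := congrFun (congrFun (congrFun h γ₀) k) k
  simp [perturbedOne, matUnit, Matrix.sum_single_one] at this

end PerturbedOne

/-- If `n γ₀ ≥ 2` (so `N` is not abelian), then
`g = 1 + e^{γ₀}_{1,1} − (1/(n_{γ₀}−1)) Σ_{i≠1} e^{γ₀}_{i,i}` satisfies `E_{Z(N)}(g) = 1`,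
and `f = (1 ⊗ g)·e` is a separating element of `N` different from `e`. -/
theorem exists_sep_ne_sepE {Γ : Type*} [Fintype Γ] [DecidableEq Γ]
    (n : Γ → ℕ) (γ₀ : Γ) (hγ₀ : 2 ≤ n γ₀) :
    EZ n (1 + matUnit n γ₀ ⟨0, by omega⟩ ⟨0, by omega⟩ -
        ((n γ₀ : ℂ) - 1)⁻¹ •
          ∑ i ∈ Finset.univ.erase (⟨0, by omega⟩ : Fin (n γ₀)), matUnit n γ₀ i i) = 1 ∧
      IsSepElt n
        ((op (1 : NAlg n) ⊗ₜ[ℂ]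
            (1 + matUnit n γ₀ ⟨0, by omega⟩ ⟨0, by omega⟩ -
              ((n γ₀ : ℂ) - 1)⁻¹ •
                ∑ i ∈ Finset.univ.erase (⟨0, by omega⟩ : Fin (n γ₀)),
                  matUnit n γ₀ i i)) * sepE n) ∧
      (op (1 : NAlg n) ⊗ₜ[ℂ]
          (1 + matUnit n γ₀ ⟨0, by omega⟩ ⟨0, by omega⟩ -
            ((n γ₀ : ℂ) - 1)⁻¹ •
              ∑ i ∈ Finset.univ.erase (⟨0, by omega⟩ : Fin (n γ₀)),
                matUnit n γ₀ i i)) * sepE n ≠ sepE n := by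
  have hg : EZ n (perturbedOne n γ₀ ⟨0, by omega⟩) = 1 := EZ_perturbedOne n _ (by omega)
  refine ⟨hg, isSepElt_op_one_tmul_mul_sepE n hg, fun h => ?_⟩
  apply perturbedOne_ne_one n γ₀ ⟨0, by omega⟩
  exact op_one_tmul_mul_sepE_injective n
    (h.trans (by simp only [op_one, ← Algebra.TensorProduct.one_def, one_mul]))
end

section
/- There exists a unique invertible element q of A_t such that Δ(1) = Σ_γ Σ_{i,j=1}^{n_γ} (1/n_γ) κ⁻¹(e^γ_{i,j} q) ⊗ e^γ_{j,i}. -/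
/- Context: a finite-dimensional C*-quantum groupoid (weak Hopf C*-algebra)
`(A, Δ, κ, ε)`, together with a fixed system of matrix units `e γ i j`
(`γ ∈ Γ` finite, `1 ≤ i,j ≤ n γ`) spanning the target Cartan subalgebra `A_t`.
The componentwise involution of `A ⊗[ℂ] A` is encoded by the field `starT`
(uniquely determined by `starT_add` and `starT_tmul`). -/

open scoped TensorProduct ComplexOrder

/-- A finite-dimensional C*-quantum groupoid (weak Hopf C*-algebra) with a chosen
system of matrix units for its target Cartan subalgebra. -/
structure WeakHopfCStar (A : Type*) (Γ : Type*) [Fintype Γ] [DecidableEq Γ]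
    [NormedRing A] [StarRing A] [CStarRing A] [NormedAlgebra ℂ A] [StarModule ℂ A]
    [FiniteDimensional ℂ A] (n : Γ → ℕ) where
  /-- the coproduct -/
  Δ : A →ₗ[ℂ] A ⊗[ℂ] A
  /-- the antipode -/
  κ : A →ₗ[ℂ] A
  /-- the counit -/
  ε : A →ₗ[ℂ] ℂ
  /-- the componentwise involution of `A ⊗ A` -/
  starT : A ⊗[ℂ] A → A ⊗[ℂ] A
  starT_add : ∀ x y : A ⊗[ℂ] A, starT (x + y) = starT x + starT y
  starT_tmul : ∀ a b : A, starT (a ⊗ₜ[ℂ] b) = star a ⊗ₜ[ℂ] star b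
  Δ_mul : ∀ a b : A, Δ (a * b) = Δ a * Δ b
  Δ_star : ∀ a : A, Δ (star a) = starT (Δ a)
  coassoc : ∀ a : A,
    (TensorProduct.assoc ℂ A A A) ((TensorProduct.map Δ LinearMap.id) (Δ a)) =
      (TensorProduct.map LinearMap.id Δ) (Δ a)
  κ_antimul : ∀ x y : A, κ (x * y) = κ y * κ x
  κ_star_sq : ∀ a : A, κ (star (κ (star a))) = a
  κ_flip : ∀ a : A,
    (TensorProduct.map κ κ) (Δ a) = (TensorProduct.comm ℂ A A) (Δ (κ a))
  antipode : ∀ x : A,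
    (TensorProduct.map ((LinearMap.mul' ℂ A).comp (TensorProduct.map κ LinearMap.id))
        LinearMap.id) ((TensorProduct.map Δ LinearMap.id) (Δ x)) =
      ((1 : A) ⊗ₜ[ℂ] x) * Δ 1
  ε_pos : ∀ a : A, 0 ≤ ε (star a * a)
  ε_counit_l : ∀ a : A,
    (TensorProduct.lid ℂ A) ((TensorProduct.map ε LinearMap.id) (Δ a)) = a
  ε_counit_r : ∀ a : A,
    (TensorProduct.rid ℂ A) ((TensorProduct.map LinearMap.id ε) (Δ a)) = a
  ε_weak : ∀ x y : A,
    (LinearMap.mul' ℂ ℂ)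
        ((TensorProduct.map ε ε) ((x ⊗ₜ[ℂ] (1 : A)) * Δ 1 * ((1 : A) ⊗ₜ[ℂ] y))) =
      ε (x * y)
  n_pos : ∀ γ : Γ, 1 ≤ n γ
  /-- the matrix units of the target Cartan subalgebra `A_t` -/
  e : (γ : Γ) → Fin (n γ) → Fin (n γ) → A
  e_target : ∀ (γ : Γ) (i j : Fin (n γ)),
    Δ (e γ i j) = Δ 1 * (e γ i j ⊗ₜ[ℂ] (1 : A)) ∧
      Δ (e γ i j) = (e γ i j ⊗ₜ[ℂ] (1 : A)) * Δ 1
  e_mul_same : ∀ (γ : Γ) (i j k l : Fin (n γ)),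
    e γ i j * e γ k l = if j = k then e γ i l else 0
  e_mul_ne : ∀ (γ δ : Γ), γ ≠ δ → ∀ (i j : Fin (n γ)) (k l : Fin (n δ)),
    e γ i j * e δ k l = 0
  e_star : ∀ (γ : Γ) (i j : Fin (n γ)), star (e γ i j) = e γ j i
  e_sum : ∑ γ : Γ, ∑ i : Fin (n γ), e γ i i = 1
  e_span : ∀ x : A,
    (Δ x = Δ 1 * (x ⊗ₜ[ℂ] (1 : A)) ∧ Δ x = (x ⊗ₜ[ℂ] (1 : A)) * Δ 1) →
      x ∈ Submodule.span ℂ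
        (Set.range fun p : Σ γ : Γ, Fin (n γ) × Fin (n γ) => e p.1 p.2.1 p.2.2)

namespace WeakHopfCStar

variable {A Γ : Type*} [Fintype Γ] [DecidableEq Γ]
  [NormedRing A] [StarRing A] [CStarRing A] [NormedAlgebra ℂ A] [StarModule ℂ A]
  [FiniteDimensional ℂ A] {n : Γ → ℕ}

/-- The target Cartan subalgebra `A_t`. -/
def tgt (W : WeakHopfCStar A Γ n) : Set A :=
  {x | W.Δ x = W.Δ 1 * (x ⊗ₜ[ℂ] (1 : A)) ∧ W.Δ x = (x ⊗ₜ[ℂ] (1 : A)) * W.Δ 1}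

/-- The source Cartan subalgebra `A_s`. -/
def src (W : WeakHopfCStar A Γ n) : Set A :=
  {x | W.Δ x = W.Δ 1 * ((1 : A) ⊗ₜ[ℂ] x) ∧ W.Δ x = ((1 : A) ⊗ₜ[ℂ] x) * W.Δ 1}

/-- The inverse of the antipode, `κ⁻¹ = * ∘ κ ∘ *`. -/
noncomputable def κinv (W : WeakHopfCStar A Γ n) (a : A) : A := star (W.κ (star a))

/-- The canonical conditional expectation `E_{Z(A_t)}` of `A_t` onto its center. -/
noncomputable def EZt (W : WeakHopfCStar A Γ n) (x : A) : A :=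
  ∑ γ : Γ, ∑ i : Fin (n γ), ∑ j : Fin (n γ),
    (n γ : ℂ)⁻¹ • (W.e γ i j * x * W.e γ j i)

/-- The defining property of the canonical element `q ∈ A_t`:
`Δ(1) = Σ_γ Σ_{i,j} (1/n_γ) κ⁻¹(e^γ_{i,j} q) ⊗ e^γ_{j,i}`. -/
noncomputable def qFormula (W : WeakHopfCStar A Γ n) (q : A) : Prop :=
  W.Δ 1 = ∑ γ : Γ, ∑ i : Fin (n γ), ∑ j : Fin (n γ),
    (n γ : ℂ)⁻¹ • (W.κinv (W.e γ i j * q) ⊗ₜ[ℂ] W.e γ j i)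

end WeakHopfCStar

namespace WeakHopfCStar

variable {A Γ : Type*} [Fintype Γ] [DecidableEq Γ]
  [NormedRing A] [StarRing A] [CStarRing A] [NormedAlgebra ℂ A] [StarModule ℂ A]
  [FiniteDimensional ℂ A] {n : Γ → ℕ}

/-- The deformed coproduct `Δ_k(a) = Δ(a)(1 ⊗ k⁻¹)`. -/
noncomputable def Δk (W : WeakHopfCStar A Γ n) (k : A) : A →ₗ[ℂ] A ⊗[ℂ] A :=
  (LinearMap.mulRight ℂ ((1 : A) ⊗ₜ[ℂ] Ring.inverse k)).comp W.Δ

/-- The deformed antipode `κ_k(a) = k κ(a) k⁻¹`. -/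
noncomputable def κk (W : WeakHopfCStar A Γ n) (k : A) : A →ₗ[ℂ] A :=
  (LinearMap.mulLeft ℂ k).comp ((LinearMap.mulRight ℂ (Ring.inverse k)).comp W.κ)

/-- The deformed counit `ε_k(a) = ε(a k)`. -/
noncomputable def εk (W : WeakHopfCStar A Γ n) (k : A) : A →ₗ[ℂ] ℂ :=
  W.ε.comp (LinearMap.mulRight ℂ k)

end WeakHopfCStar

open TensorProduct

/-!
Slicing the first leg of `Δ(1)` with any functional `ψ` gives an element `s` with
`Δ(s) = Δ(1)(s ⊗ 1)`: coassociativity and the antipode axiom give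
`(id ⊗ Δ)Δ(1) = (1 ⊗ Δ(1))(Δ(1) ⊗ 1)`. As `Δ(1)` is self-adjoint, also `Δ(s) = (s ⊗ 1)Δ(1)`,
so the second legs of `Δ(1)` lie in `A_t` and `Δ(1) = Σ F^γ_{ij} ⊗ e^γ_{ij}`.

The antipode axiom gives `Δ(1)(1 ⊗ z) = Δ(1)(κ⁻¹(z) ⊗ 1)` for `z ∈ A_t`; compressing the second
leg by matrix units this reads `F_{kl} κ⁻¹(e_{al}) = F_{ka}`. Hence `q = 1₍₂₎ κ(1₍₁₎)`, which is
`Σ e_{ij} κ(F_{ij})`, satisfies `e_{ji} q = n_γ κ(F_{ij})`: this is the required formula, and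
with the counit axiom `Σ ε(e_{ij}) F_{ij} = 1` it exhibits a left inverse of `q`. Since
`(κ ⊗ κ)Δ(1) = ςΔ(1)`, `κ` maps right slices of `Δ(1)` to left slices, so `κ(F_{ij}) ∈ A_t` and
`q ∈ A_t`. Uniqueness: `a ⊗ b ↦ b κ(a)` sends the right-hand side of the formula back to `q`.
-/

namespace TensorProduct

section Slice

variable {R M N P Q : Type*} [CommSemiring R] [AddCommMonoid M] [AddCommMonoid N]
  [AddCommMonoid P] [AddCommMonoid Q] [Module R M] [Module R N] [Module R P] [Module R Q]

noncomputable def sliceL (ψ : M →ₗ[R] R) : M ⊗[R] N →ₗ[R] N :=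
  (TensorProduct.lid R N).toLinearMap ∘ₗ LinearMap.rTensor N ψ

noncomputable def sliceR (φ : N →ₗ[R] R) : M ⊗[R] N →ₗ[R] M :=
  (TensorProduct.rid R M).toLinearMap ∘ₗ LinearMap.lTensor M φ

@[simp] lemma sliceL_tmul (ψ : M →ₗ[R] R) (a : M) (b : N) :
    sliceL ψ (a ⊗ₜ[R] b) = ψ a • b := by
  simp [sliceL]

@[simp] lemma sliceR_tmul (φ : N →ₗ[R] R) (a : M) (b : N) :
    sliceR φ (a ⊗ₜ[R] b) = φ b • a := by
  simp [sliceR]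

lemma sliceL_map (ψ : P →ₗ[R] R) (f : M →ₗ[R] P) (g : N →ₗ[R] Q) (t : M ⊗[R] N) :
    sliceL ψ (map f g t) = g (sliceL (ψ ∘ₗ f) t) := by
  induction t with
  | zero => simp
  | tmul a b => simp
  | add x y hx hy => simp only [map_add, hx, hy]

lemma sliceR_map (φ : Q →ₗ[R] R) (f : M →ₗ[R] P) (g : N →ₗ[R] Q) (t : M ⊗[R] N) :
    sliceR φ (map f g t) = f (sliceR (φ ∘ₗ g) t) := by
  induction t with
  | zero => simp
  | tmul a b => simp
  | add x y hx hy => simp only [map_add, hx, hy]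

lemma sliceR_comm (φ : M →ₗ[R] R) (t : M ⊗[R] N) :
    sliceR φ (TensorProduct.comm R M N t) = sliceL φ t := by
  induction t with
  | zero => simp
  | tmul a b => simp
  | add x y hx hy => simp only [map_add, hx, hy]

lemma sliceL_assoc (ψ : M →ₗ[R] R) (t : (M ⊗[R] N) ⊗[R] P) :
    sliceL ψ (TensorProduct.assoc R M N P t) = map (sliceL ψ) LinearMap.id t := by
  induction t with
  | zero => simp
  | tmul x c =>
    induction x with
    | zero => simp
    | tmul a b => simp [smul_tmul']
    | add x y hx hy => simp only [add_tmul, map_add, hx, hy]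
  | add x y hx hy => simp only [map_add, hx, hy]

lemma _root_.Module.Basis.sum_tmul_sliceL_coord {ι : Type*} [Fintype ι] (b : Module.Basis ι R M)
    (t : M ⊗[R] N) : ∑ j, b j ⊗ₜ[R] sliceL (b.coord j) t = t := by
  induction t with
  | zero => simp
  | tmul a c =>
    simp only [sliceL_tmul, Module.Basis.coord_apply, ← smul_tmul]
    rw [← sum_tmul, b.sum_repr]
  | add x y hx hy => simp only [map_add, tmul_add, Finset.sum_add_distrib, hx, hy]

lemma exists_eq_sum_tmul_of_forall_sliceL_mem [Module.Free R M] [Module.Finite R M]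
    {ι : Type*} [Fintype ι] (v : ι → N) (t : M ⊗[R] N)
    (h : ∀ ψ : Module.Dual R M, sliceL ψ t ∈ Submodule.span R (Set.range v)) :
    ∃ F : ι → M, t = ∑ i, F i ⊗ₜ[R] v i := by
  let b := Module.Free.chooseBasis R M
  choose c hc using fun j => (Submodule.mem_span_range_iff_exists_fun R).1 (h (b.coord j))
  refine ⟨fun i => ∑ j, c j i • b j, ?_⟩
  conv_lhs => rw [← b.sum_tmul_sliceL_coord t]
  simp only [← hc, sum_tmul, tmul_sum, smul_tmul, Finset.sum_comm (γ := ι)]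

end Slice

section StarSlice

variable {R M N : Type*} [CommSemiring R] [StarRing R] [AddCommMonoid M] [AddCommMonoid N]
  [Module R M] [Module R N] [StarAddMonoid M] [StarAddMonoid N] [StarModule R M]
  [StarModule R N]

lemma star_sliceL (ψ : M →ₗ[R] R) (t : M ⊗[R] N) :
    star (sliceL ψ t) = sliceL (star (WithConv.toConv ψ)).ofConv (star t) := by
  induction t with
  | zero => simp
  | tmul a b => simp
  | add x y hx hy => simp only [map_add, star_add, hx, hy]

end StarSlice

section AlgebraSlice

variable {R B C : Type*} [CommSemiring R] [Semiring B] [Algebra R B] [Semiring C] [Algebra R C]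

lemma sliceL_one_tmul_mul (ψ : B →ₗ[R] R) (y : C) (t : B ⊗[R] C) :
    sliceL ψ (((1 : B) ⊗ₜ[R] y) * t) = y * sliceL ψ t := by
  induction t with
  | zero => simp
  | tmul a b => simp
  | add s t hs ht => rw [mul_add, map_add, map_add, hs, ht, mul_add]

lemma map_mulRight_id (s : B) (t : B ⊗[R] C) :
    map (LinearMap.mulRight R s) LinearMap.id t = t * (s ⊗ₜ[R] (1 : C)) := by
  induction t with
  | zero => simp
  | tmul a b => simp
  | add x y hx hy => rw [map_add, hx, hy, add_mul]

end AlgebraSlice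

lemma tmul_left_injective {K M N : Type*} [Field K] [AddCommGroup M] [AddCommGroup N]
    [Module K M] [Module K N] {y : N} (hy : y ≠ 0) :
    Function.Injective fun x : M => x ⊗ₜ[K] y := by
  intro x x' h
  obtain ⟨φ, hφ⟩ := Module.Projective.exists_dual_eq_one K hy
  simpa [hφ] using congrArg (sliceR (M := M) φ) h

end TensorProduct

namespace WeakHopfCStar

variable {A Γ : Type*} [Fintype Γ] [DecidableEq Γ]
  [NormedRing A] [StarRing A] [CStarRing A] [NormedAlgebra ℂ A] [StarModule ℂ A]
  [FiniteDimensional ℂ A] {n : Γ → ℕ} (W : WeakHopfCStar A Γ n)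
  {F : ∀ γ, Fin (n γ) → Fin (n γ) → A}

lemma κ_κinv (a : A) : W.κ (W.κinv a) = a := W.κ_star_sq a

lemma κinv_κ (a : A) : W.κinv (W.κ a) = a := by
  simpa [κinv] using congrArg star (W.κ_star_sq (star a))

noncomputable def κEquiv : A ≃ₗ[ℂ] A :=
  { W.κ with invFun := W.κinv, left_inv := W.κinv_κ, right_inv := W.κ_κinv }

@[simp] lemma κEquiv_symm_apply (a : A) : W.κEquiv.symm a = W.κinv a := rfl

lemma κ_one : W.κ 1 = 1 :=
  calc W.κ 1 = W.κ (W.κinv 1) * W.κ 1 := by rw [W.κ_κinv, one_mul]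
    _ = 1 := by rw [← W.κ_antimul, one_mul, W.κ_κinv]

lemma starT_eq_star (t : A ⊗[ℂ] A) : W.starT t = star t := by
  induction t with
  | zero => simpa using W.starT_add 0 0
  | tmul a b => simp [W.starT_tmul]
  | add x y hx hy => rw [W.starT_add, hx, hy, star_add]

lemma Δ_star_eq_star (a : A) : W.Δ (star a) = star (W.Δ a) :=
  (W.Δ_star a).trans (W.starT_eq_star _)

lemma star_Δ_one : star (W.Δ 1) = W.Δ 1 := by
  rw [← W.Δ_star_eq_star, star_one]

lemma Δ_one_mul_Δ (a : A) : W.Δ 1 * W.Δ a = W.Δ a := by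
  rw [← W.Δ_mul, one_mul]

lemma Δ_mul_Δ_one (a : A) : W.Δ a * W.Δ 1 = W.Δ a := by
  rw [← W.Δ_mul, mul_one]

lemma star_mem_tgt {z : A} (hz : z ∈ W.tgt) : star z ∈ W.tgt := by
  have h : W.Δ (star z) = star (z ⊗ₜ[ℂ] (1 : A)) * W.Δ 1 := by
    rw [W.Δ_star_eq_star, hz.1, star_mul, W.star_Δ_one]
  refine ⟨?_, by simpa using h⟩
  rw [W.Δ_star_eq_star, hz.2, star_mul, W.star_Δ_one, TensorProduct.star_tmul, star_one]

noncomputable def tgtSubalgebra : Subalgebra ℂ A where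
  carrier := W.tgt
  mul_mem' {x y} hx hy := by
    constructor
    · rw [W.Δ_mul, hy.1, ← mul_assoc, W.Δ_mul_Δ_one, hx.1, mul_assoc,
        Algebra.TensorProduct.tmul_mul_tmul, mul_one]
    · rw [W.Δ_mul, hx.2, mul_assoc, W.Δ_one_mul_Δ, hy.2, ← mul_assoc,
        Algebra.TensorProduct.tmul_mul_tmul, mul_one]
  add_mem' {x y} hx hy := ⟨by rw [map_add, hx.1, hy.1, add_tmul, mul_add],
    by rw [map_add, hx.2, hy.2, add_tmul, add_mul]⟩
  algebraMap_mem' c := by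
    constructor <;>
      simp only [Algebra.algebraMap_eq_smul_one, map_smul, ← smul_tmul', mul_smul_comm,
        smul_mul_assoc, ← Algebra.TensorProduct.one_def, mul_one, one_mul]

lemma e_eq_zero_of_eq_zero {γ : Γ} {i j : Fin (n γ)} (h : W.e γ i j = 0) (k l : Fin (n γ)) :
    W.e γ k l = 0 := by
  have : W.e γ k l = W.e γ k i * W.e γ i j * W.e γ j l := by simp [W.e_mul_same]
  rw [this, h, mul_zero, zero_mul]

lemma sum_apply_e_mul_e {M : Type*} [AddCommMonoid M] (g : ∀ δ, Fin (n δ) → Fin (n δ) → A → M)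
    (hg : ∀ δ i j, g δ i j 0 = 0) {γ : Γ} (k a : Fin (n γ)) :
    ∑ δ, ∑ i, ∑ j, g δ i j (W.e γ k a * W.e δ i j) = ∑ l, g γ a l (W.e γ k l) := by
  rw [Finset.sum_eq_single_of_mem γ (Finset.mem_univ γ) fun δ _ hδ => by
    simp [W.e_mul_ne γ δ (Ne.symm hδ), hg]]
  simp [W.e_mul_same, apply_ite (g γ _ _), hg]

lemma sum_apply_e_mul_e_mul_e {M : Type*} [AddCommMonoid M]
    (g : ∀ δ, Fin (n δ) → Fin (n δ) → A → M) (hg : ∀ δ i j, g δ i j 0 = 0) {γ : Γ}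
    (k a b l : Fin (n γ)) :
    ∑ δ, ∑ i, ∑ j, g δ i j (W.e γ k a * W.e δ i j * W.e γ b l) = g γ a b (W.e γ k l) := by
  rw [W.sum_apply_e_mul_e (fun δ i j y => g δ i j (y * W.e γ b l)) (by simp [hg])]
  simp [W.e_mul_same, apply_ite (g γ _ _), hg]

noncomputable def sumTmulE (x : ∀ γ, Fin (n γ) → Fin (n γ) → A) : A ⊗[ℂ] A :=
  ∑ γ, ∑ i, ∑ j, x γ i j ⊗ₜ[ℂ] W.e γ i j

lemma one_tmul_e_mul_sumTmulE_mul_one_tmul_e (x : ∀ γ, Fin (n γ) → Fin (n γ) → A) {γ : Γ}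
    (k a b l : Fin (n γ)) :
    ((1 : A) ⊗ₜ[ℂ] W.e γ k a) * W.sumTmulE x * ((1 : A) ⊗ₜ[ℂ] W.e γ b l) =
      x γ a b ⊗ₜ[ℂ] W.e γ k l := by
  simp only [sumTmulE, Finset.mul_sum, Finset.sum_mul, Algebra.TensorProduct.tmul_mul_tmul,
    one_mul, mul_one]
  exact W.sum_apply_e_mul_e_mul_e (fun δ i j y => x δ i j ⊗ₜ[ℂ] y) (by simp) k a b l

/-- `x ↦ κ(x₍₁₎) x₍₂₎`, the source counital map `ε_s`. -/
noncomputable def εs : A →ₗ[ℂ] A :=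
  LinearMap.mul' ℂ A ∘ₗ map W.κ LinearMap.id ∘ₗ W.Δ

lemma map_εs_Δ (x : A) : map W.εs LinearMap.id (W.Δ x) = ((1 : A) ⊗ₜ[ℂ] x) * W.Δ 1 := by
  rw [← W.antipode x, map_map, LinearMap.id_comp]
  rfl

lemma map_εs_Δ_one : map W.εs LinearMap.id (W.Δ 1) = W.Δ 1 := by
  rw [map_εs_Δ, ← Algebra.TensorProduct.one_def, one_mul]

lemma mul'_map_κ_mul_tmul_one (z : A) (t : A ⊗[ℂ] A) :
    LinearMap.mul' ℂ A (map W.κ LinearMap.id (t * (z ⊗ₜ[ℂ] (1 : A)))) =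
      W.κ z * LinearMap.mul' ℂ A (map W.κ LinearMap.id t) := by
  induction t with
  | zero => simp
  | tmul a b => simp [W.κ_antimul, mul_assoc]
  | add s t hs ht => rw [add_mul, map_add, map_add, hs, ht, map_add, map_add, mul_add]

lemma εs_mul_of_Δ_eq {z : A} (hz : W.Δ z = W.Δ 1 * (z ⊗ₜ[ℂ] (1 : A))) (x : A) :
    W.εs (x * z) = W.κ z * W.εs x := by
  have hΔ : W.Δ (x * z) = W.Δ x * (z ⊗ₜ[ℂ] (1 : A)) := by
    rw [W.Δ_mul, hz, ← mul_assoc, W.Δ_mul_Δ_one]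
  simp only [εs, LinearMap.comp_apply, hΔ, mul'_map_κ_mul_tmul_one]

lemma one_tmul_mul_Δ_one {z : A} (hz : W.Δ z = W.Δ 1 * (z ⊗ₜ[ℂ] (1 : A))) :
    ((1 : A) ⊗ₜ[ℂ] z) * W.Δ 1 = (W.κ z ⊗ₜ[ℂ] (1 : A)) * W.Δ 1 := by
  have key : ∀ t : A ⊗[ℂ] A, map W.εs LinearMap.id (t * (z ⊗ₜ[ℂ] (1 : A))) =
      (W.κ z ⊗ₜ[ℂ] (1 : A)) * map W.εs LinearMap.id t := by
    intro t
    induction t with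
    | zero => simp
    | tmul a b => simp [W.εs_mul_of_Δ_eq hz]
    | add s t hs ht => rw [add_mul, map_add, hs, ht, map_add, mul_add]
  rw [← W.map_εs_Δ z, hz, key, W.map_εs_Δ_one]

lemma Δ_one_mul_one_tmul {z : A} (hz : z ∈ W.tgt) :
    W.Δ 1 * ((1 : A) ⊗ₜ[ℂ] z) = W.Δ 1 * (W.κinv z ⊗ₜ[ℂ] (1 : A)) := by
  have h := congrArg star (W.one_tmul_mul_Δ_one (W.star_mem_tgt hz).1)
  simpa only [star_mul, W.star_Δ_one, TensorProduct.star_tmul, star_one, star_star, κinv] using h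

/-- `(id ⊗ Δ) Δ(1) = (1 ⊗ Δ(1)) (Δ(1) ⊗ 1)`, written with `y ↦ (1 ⊗ y) Δ(1)` in the first leg. -/
lemma map_id_Δ_Δ_one :
    map LinearMap.id W.Δ (W.Δ 1) = TensorProduct.assoc ℂ A A A
      (map (LinearMap.mulRight ℂ (W.Δ 1) ∘ₗ TensorProduct.mk ℂ A A 1) LinearMap.id (W.Δ 1)) := by
  have hPhi : LinearMap.mulRight ℂ (W.Δ 1) ∘ₗ TensorProduct.mk ℂ A A 1 =
      map W.εs LinearMap.id ∘ₗ W.Δ := by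
    ext y
    exact (W.map_εs_Δ y).symm
  rw [hPhi]
  calc map LinearMap.id W.Δ (W.Δ 1)
      = map LinearMap.id W.Δ (map W.εs LinearMap.id (W.Δ 1)) := by rw [W.map_εs_Δ_one]
    _ = map W.εs (map LinearMap.id LinearMap.id) (map LinearMap.id W.Δ (W.Δ 1)) := by
      simp only [map_map, map_id, LinearMap.id_comp, LinearMap.comp_id]
    _ = TensorProduct.assoc ℂ A A A (map (map W.εs LinearMap.id) LinearMap.id
          ((TensorProduct.assoc ℂ A A A).symm (map LinearMap.id W.Δ (W.Δ 1)))) := by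
      rw [map_map_assoc_symm, LinearEquiv.apply_symm_apply]
    _ = TensorProduct.assoc ℂ A A A
          (map (map W.εs LinearMap.id ∘ₗ W.Δ) LinearMap.id (W.Δ 1)) := by
      rw [← W.coassoc 1, LinearEquiv.symm_apply_apply, map_map, LinearMap.id_comp]

lemma Δ_sliceL_Δ_one (ψ : Module.Dual ℂ A) :
    W.Δ (sliceL ψ (W.Δ 1)) = W.Δ 1 * (sliceL ψ (W.Δ 1) ⊗ₜ[ℂ] (1 : A)) := by
  set s := sliceL ψ (W.Δ 1)
  have hslice : sliceL ψ ∘ₗ LinearMap.mulRight ℂ (W.Δ 1) ∘ₗ TensorProduct.mk ℂ A A 1 =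
      LinearMap.mulRight ℂ s := by
    ext y
    exact sliceL_one_tmul_mul ψ y (W.Δ 1)
  calc W.Δ s = sliceL ψ (map LinearMap.id W.Δ (W.Δ 1)) := by
        rw [sliceL_map, LinearMap.comp_id]
    _ = map (LinearMap.mulRight ℂ s) LinearMap.id (W.Δ 1) := by
        rw [map_id_Δ_Δ_one, sliceL_assoc, map_map, hslice,
          LinearMap.id_comp]
    _ = W.Δ 1 * (s ⊗ₜ[ℂ] (1 : A)) := map_mulRight_id s _

/-- The second condition is the first one for the conjugate functional: `Δ(1)` is self-adjoint. -/
lemma sliceL_Δ_one_mem_tgt (ψ : Module.Dual ℂ A) : sliceL ψ (W.Δ 1) ∈ W.tgt := by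
  refine ⟨W.Δ_sliceL_Δ_one ψ, ?_⟩
  set ψ' : Module.Dual ℂ A := (star (WithConv.toConv ψ)).ofConv
  have hstar : sliceL ψ (W.Δ 1) = star (sliceL ψ' (W.Δ 1)) := by
    rw [star_sliceL, W.star_Δ_one]
    simp [ψ']
  rw [hstar, W.Δ_star_eq_star, W.Δ_sliceL_Δ_one, star_mul, W.star_Δ_one, TensorProduct.star_tmul,
    star_one]

lemma exists_Δ_one_eq_sumTmulE : ∃ F : ∀ γ, Fin (n γ) → Fin (n γ) → A, W.Δ 1 = W.sumTmulE F := by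
  obtain ⟨F, hF⟩ := exists_eq_sum_tmul_of_forall_sliceL_mem
    (fun p : Σ γ, Fin (n γ) × Fin (n γ) => W.e p.1 p.2.1 p.2.2) (W.Δ 1)
    fun ψ => W.e_span _ (W.sliceL_Δ_one_mem_tgt ψ)
  refine ⟨fun γ i j => F ⟨γ, (i, j)⟩, ?_⟩
  rw [hF, sumTmulE, ← Finset.univ_sigma_univ, Finset.sum_sigma]
  simp only [Finset.univ_product_univ.symm, Finset.sum_product]

noncomputable def flipMulκ : A ⊗[ℂ] A →ₗ[ℂ] A :=
  LinearMap.mul' ℂ A ∘ₗ map LinearMap.id W.κ ∘ₗ (TensorProduct.comm ℂ A A).toLinearMap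

@[simp] lemma flipMulκ_tmul (a b : A) : W.flipMulκ (a ⊗ₜ[ℂ] b) = b * W.κ a := rfl

noncomputable def q : A := W.flipMulκ (W.Δ 1)

lemma n_ne_zero (W : WeakHopfCStar A Γ n) (γ : Γ) : (n γ : ℂ) ≠ 0 :=
  Nat.cast_ne_zero.2 (Nat.one_le_iff_ne_zero.1 (W.n_pos γ))

lemma eq_q_of_qFormula {z : A} (hz : W.qFormula z) : z = W.q := by
  have hblock (γ : Γ) :
      ∑ i : Fin (n γ), ∑ j, (n γ : ℂ)⁻¹ • (W.e γ j i * (W.e γ i j * z)) =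
        (∑ j, W.e γ j j) * z := by
    simp only [← mul_assoc, W.e_mul_same, if_true, Finset.sum_mul, Finset.sum_const,
      Finset.card_univ, Fintype.card_fin, ← Nat.cast_smul_eq_nsmul ℂ, Finset.smul_sum, smul_smul,
      mul_inv_cancel₀ (W.n_ne_zero γ), one_smul]
  rw [q, hz]
  simp only [map_sum, map_smul, flipMulκ_tmul, κ_κinv, hblock, ← Finset.sum_mul, W.e_sum,
    one_mul]

lemma κ_sliceR_Δ_one (φ : Module.Dual ℂ A) :
    W.κ (sliceR φ (W.Δ 1)) = sliceL (φ ∘ₗ W.κEquiv.symm.toLinearMap) (W.Δ 1) := by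
  have hflip : map W.κ W.κ (W.Δ 1) = TensorProduct.comm ℂ A A (W.Δ 1) := by
    rw [W.κ_flip, W.κ_one]
  rw [← sliceR_comm, ← hflip, sliceR_map]
  congr 2
  ext a
  simp [κinv_κ]

lemma coeff_mul_κinv_e (hF : W.Δ 1 = W.sumTmulE F) {γ : Γ} {k l : Fin (n γ)}
    (hkl : W.e γ k l ≠ 0) (a : Fin (n γ)) : F γ k l * W.κinv (W.e γ a l) = F γ k a := by
  apply tmul_left_injective (K := ℂ) hkl
  have h := W.Δ_one_mul_one_tmul (W.e_target γ a l)
  calc (F γ k l * W.κinv (W.e γ a l)) ⊗ₜ[ℂ] W.e γ k l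
      = ((1 : A) ⊗ₜ[ℂ] W.e γ k k) * W.Δ 1 * ((1 : A) ⊗ₜ[ℂ] W.e γ l l) *
          (W.κinv (W.e γ a l) ⊗ₜ[ℂ] (1 : A)) := by
        rw [hF, one_tmul_e_mul_sumTmulE_mul_one_tmul_e, Algebra.TensorProduct.tmul_mul_tmul,
          mul_one]
    _ = ((1 : A) ⊗ₜ[ℂ] W.e γ k k) * (W.Δ 1 * (W.κinv (W.e γ a l) ⊗ₜ[ℂ] (1 : A))) *
          ((1 : A) ⊗ₜ[ℂ] W.e γ l l) := by
        simp only [mul_assoc, Algebra.TensorProduct.tmul_mul_tmul, one_mul, mul_one]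
    _ = ((1 : A) ⊗ₜ[ℂ] W.e γ k k) * W.Δ 1 * ((1 : A) ⊗ₜ[ℂ] W.e γ a l) := by
        simp only [← h, mul_assoc, Algebra.TensorProduct.tmul_mul_tmul, one_mul, W.e_mul_same,
          if_true]
    _ = F γ k a ⊗ₜ[ℂ] W.e γ k l := by
        rw [hF, one_tmul_e_mul_sumTmulE_mul_one_tmul_e]

lemma κ_coeff_mem_tgt (hF : W.Δ 1 = W.sumTmulE F) {γ : Γ} {i j : Fin (n γ)}
    (hij : W.e γ i j ≠ 0) : W.κ (F γ i j) ∈ W.tgt := by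
  obtain ⟨φ, hφ⟩ := Module.Projective.exists_dual_eq_one ℂ hij
  have hslice : F γ i j = sliceR (φ ∘ₗ LinearMap.mulLeft ℂ (W.e γ i i) ∘ₗ
      LinearMap.mulRight ℂ (W.e γ j j)) (W.Δ 1) := by
    simp only [hF, sumTmulE, map_sum, sliceR_tmul, LinearMap.comp_apply, LinearMap.mulLeft_apply,
      LinearMap.mulRight_apply, ← mul_assoc]
    rw [W.sum_apply_e_mul_e_mul_e (fun δ k l y => φ y • F δ k l) (by simp), hφ, one_smul]
  rw [hslice, κ_sliceR_Δ_one]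
  exact W.sliceL_Δ_one_mem_tgt _

lemma q_eq_sum (hF : W.Δ 1 = W.sumTmulE F) :
    W.q = ∑ γ, ∑ i, ∑ j, W.e γ i j * W.κ (F γ i j) := by
  simp [q, hF, sumTmulE, map_sum]

lemma e_mul_q (hF : W.Δ 1 = W.sumTmulE F) {γ : Γ} {i j : Fin (n γ)} (hij : W.e γ i j ≠ 0) :
    W.e γ j i * W.q = (n γ : ℂ) • W.κ (F γ i j) := by
  have hterm (l : Fin (n γ)) : W.e γ j l * W.κ (F γ i l) = W.κ (F γ i j) := by
    rw [← W.coeff_mul_κinv_e hF (fun h0 => hij (W.e_eq_zero_of_eq_zero h0 i j)) j, W.κ_antimul,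
      W.κ_κinv]
  simp only [W.q_eq_sum hF, Finset.mul_sum, ← mul_assoc]
  rw [W.sum_apply_e_mul_e (fun δ k l y => y * W.κ (F δ k l)) (fun _ _ _ => zero_mul _) j i]
  simp only [hterm, Finset.sum_const, Finset.card_univ, Fintype.card_fin, Nat.cast_smul_eq_nsmul]

lemma sum_ε_e_smul_coeff (hF : W.Δ 1 = W.sumTmulE F) :
    ∑ γ, ∑ i, ∑ j, W.ε (W.e γ i j) • F γ i j = 1 := by
  simpa [hF, sumTmulE, map_sum] using W.ε_counit_r 1

lemma q_mem_tgt : W.q ∈ W.tgt := by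
  obtain ⟨F, hF⟩ := W.exists_Δ_one_eq_sumTmulE
  rw [W.q_eq_sum hF]
  refine W.tgtSubalgebra.sum_mem fun γ _ => sum_mem fun i _ => sum_mem fun j _ => ?_
  by_cases hij : W.e γ i j = 0
  · rw [hij, zero_mul]
    exact W.tgtSubalgebra.zero_mem
  · exact W.tgtSubalgebra.mul_mem (W.e_target γ i j) (W.κ_coeff_mem_tgt hF hij)

lemma isUnit_q : IsUnit W.q := by
  obtain ⟨F, hF⟩ := W.exists_Δ_one_eq_sumTmulE
  have hterm (γ : Γ) (i j : Fin (n γ)) :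
      (((n γ : ℂ)⁻¹ * W.ε (W.e γ i j)) • W.e γ j i) * W.q = W.ε (W.e γ i j) • W.κ (F γ i j) := by
    by_cases hij : W.e γ i j = 0
    · simp [hij]
    · rw [smul_mul_assoc, W.e_mul_q hF hij, smul_smul, mul_right_comm,
        inv_mul_cancel₀ (W.n_ne_zero γ), one_mul]
  have := IsArtinianRing.of_finite ℂ A
  refine IsUnit.of_mul_eq_one_right (∑ γ, ∑ i, ∑ j, ((n γ : ℂ)⁻¹ * W.ε (W.e γ i j)) • W.e γ j i) ?_
  simp only [Finset.sum_mul, hterm, ← map_smul, ← map_sum, W.sum_ε_e_smul_coeff hF, W.κ_one]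

lemma qFormula_q : W.qFormula W.q := by
  obtain ⟨F, hF⟩ := W.exists_Δ_one_eq_sumTmulE
  have hterm (γ : Γ) (i j : Fin (n γ)) :
      (n γ : ℂ)⁻¹ • (W.κinv (W.e γ j i * W.q) ⊗ₜ[ℂ] W.e γ i j) = F γ i j ⊗ₜ[ℂ] W.e γ i j := by
    by_cases hij : W.e γ i j = 0
    · simp [hij]
    · rw [W.e_mul_q hF hij, ← map_smul, κinv_κ, ← smul_tmul', smul_smul,
        inv_mul_cancel₀ (W.n_ne_zero γ), one_smul]
  rw [qFormula, hF, sumTmulE]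
  refine Finset.sum_congr rfl fun γ _ => ?_
  rw [Finset.sum_comm]
  simp only [hterm]

end WeakHopfCStar

/-- There exists a unique invertible element `q` of `A_t` such that
`Δ(1) = Σ_γ Σ_{i,j} (1/n_γ) κ⁻¹(e^γ_{i,j} q) ⊗ e^γ_{j,i}`. -/
theorem WeakHopfCStar.existsUnique_q {A Γ : Type*} [Fintype Γ] [DecidableEq Γ]
    [NormedRing A] [StarRing A] [CStarRing A] [NormedAlgebra ℂ A] [StarModule ℂ A]
    [FiniteDimensional ℂ A] {n : Γ → ℕ} (W : WeakHopfCStar A Γ n) :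
    ∃! q : A, q ∈ W.tgt ∧ IsUnit q ∧ W.qFormula q :=
  ⟨W.q, ⟨W.q_mem_tgt, W.isUnit_q, W.qFormula_q⟩, fun _ hz => W.eq_q_of_qFormula hz.2.2⟩
end
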